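/- arXiv:gr-qc/0611053 — 4 statements merged into one kernel-verified Lean document; each statement's English description precedes it below -/
import Mathlib

section
/- Let ρ, p, p_T : (0,∞) → [0,∞) be continuous functions with ρ compactly supported, not identically zero, and non-increasing, and suppose p_T(r) ≤ p(r) for all r > 0. Let m(r) = 4π ∫₀^r s² ρ(s) ds and assume 2m(r) < r for all r > 0. Define λ(r) = −(1/2)·log(1 − 2m(r)/r) and let μ ∈ C²((0,∞)) satisfy μ′(r) = e^{2λ(r)} ( m(r)/r² + 4π r p(r) ) and the field equation e^{−2λ}( μ″ + (μ′ + 1/r)(μ′ − λ′) ) = 8π p_T on (0,∞), with μ extending continuously to r = 0. Then sup_{r>0} 2m(r)/r < 8/9. -/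
open Real MeasureTheory Filter Topology Set

/-!
Buchdahl's argument. Since `ρ` is non-increasing, `4πr³ρ(r) ≤ 3m(r)`, so `m(r)/r³` is
non-increasing. By the second field equation the derivative of the Buchdahl function
`f = e^{-λ} μ' e^{μ} / r` is a positive multiple of `8π(p_T - p) + 4πρ - 3m/r³ ≤ 0`, so `f`
is non-increasing. For `0 < s ≤ r` this gives
`(e^μ)'(s) = f(s) s e^{λ(s)} ≥ f(r) s / √(1 - k s²)` with `k = 2m(r)/r³`, because
`2m(s)/s ≥ k s²`. Comparing with the primitive of the right-hand side on `[0, r]` and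
using `μ' ≥ e^{2λ} m / r²` yields, with `x = √(1 - 2m(r)/r)`,
`2x e^{μ(0)} ≤ e^{μ(r)} (3x - 1)`, hence `x > 1/3`. The bound is uniform in `r`: beyond the
support `m` is constant, and on a bounded range `e^μ` is bounded since `μ` is non-decreasing.
-/

theorem antitoneOn_Ioi_of_hasDerivAt_nonpos {f f' : ℝ → ℝ} {a : ℝ}
    (hf : ∀ x > a, HasDerivAt f (f' x) x) (hf' : ∀ x > a, f' x ≤ 0) :
    AntitoneOn f (Ioi a) :=
  antitoneOn_of_hasDerivWithinAt_nonpos (convex_Ioi a)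
    (fun x hx => (hf x hx).continuousAt.continuousWithinAt)
    (by simpa using fun x hx => (hf x hx).hasDerivWithinAt) (by simpa using hf')

theorem monotoneOn_Ioi_of_hasDerivAt_nonneg {f f' : ℝ → ℝ} {a : ℝ}
    (hf : ∀ x > a, HasDerivAt f (f' x) x) (hf' : ∀ x > a, 0 ≤ f' x) :
    MonotoneOn f (Ioi a) :=
  monotoneOn_of_hasDerivWithinAt_nonneg (convex_Ioi a)
    (fun x hx => (hf x hx).continuousAt.continuousWithinAt)
    (by simpa using fun x hx => (hf x hx).hasDerivWithinAt) (by simpa using hf')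

theorem continuousOn_Icc_of_hasDerivAt {f f' : ℝ → ℝ} {a b : ℝ}
    (hf : ∀ x > a, HasDerivAt f (f' x) x) (ha : ContinuousWithinAt f (Ioi a) a) :
    ContinuousOn f (Icc a b) := by
  intro x hx
  rcases hx.1.eq_or_lt with rfl | hax
  · exact (continuousWithinAt_Ioi_iff_Ici.1 ha).mono Icc_subset_Ici_self
  · exact (hf x hax).continuousAt.continuousWithinAt

theorem sub_le_sub_of_hasDerivAt_le {f g f' g' : ℝ → ℝ} {a b : ℝ} (hab : a ≤ b)
    (hf : ContinuousOn f (Icc a b)) (hg : ContinuousOn g (Icc a b))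
    (hf' : ∀ x ∈ Ioo a b, HasDerivAt f (f' x) x)
    (hg' : ∀ x ∈ Ioo a b, HasDerivAt g (g' x) x)
    (hle : ∀ x ∈ Ioo a b, f' x ≤ g' x) : f b - f a ≤ g b - g a := by
  have hmono : MonotoneOn (g - f) (Icc a b) :=
    monotoneOn_of_hasDerivWithinAt_nonneg (convex_Icc a b) (hg.sub hf)
      (by simpa using fun x hx => ((hg' x hx).sub (hf' x hx)).hasDerivWithinAt)
      (by simpa using fun x hx => sub_nonneg.2 (hle x hx))
  have := hmono (left_mem_Icc.2 hab) (right_mem_Icc.2 hab) hab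
  simp only [Pi.sub_apply] at this
  linarith

theorem antitoneOn_div_pow_of_mul_deriv_le {f f' : ℝ → ℝ} (n : ℕ)
    (hf : ∀ x > 0, HasDerivAt f (f' x) x) (h : ∀ x > 0, x * f' x ≤ n * f x) :
    AntitoneOn (fun x => f x / x ^ n) (Ioi 0) := by
  refine antitoneOn_Ioi_of_hasDerivAt_nonpos (fun x hx =>
    (hf x hx).div (hasDerivAt_pow n x) (pow_pos hx n).ne') fun x hx => ?_
  refine div_nonpos_of_nonpos_of_nonneg ?_ (sq_nonneg _)
  cases n with
  | zero => simpa using (mul_nonpos_iff_pos_imp_nonpos.1 (by simpa using h x hx)).1 hx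
  | succ k =>
    have := mul_le_mul_of_nonneg_left (h x hx) (pow_pos hx k).le
    simp only [add_tsub_cancel_right, pow_succ] at this ⊢
    linarith

theorem IntervalIntegrable.of_continuousOn_Ioi {g : ℝ → ℝ} {c a b : ℝ}
    (hg : ContinuousOn g (Ioi c)) (ha : c < a) (hb : c < b)
    (h : IntervalIntegrable g volume c a) : IntervalIntegrable g volume c b :=
  h.trans (hg.mono fun _ hx => lt_of_lt_of_le (lt_min ha hb) hx.1).intervalIntegrable

theorem sSup_setOf_pos_lt {f : ℝ → ℝ} {B c : ℝ} (hB : B < c) (h : ∀ r > 0, f r ≤ B) :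
    sSup {x | ∃ r > 0, x = f r} < c := by
  refine lt_of_le_of_lt (csSup_le ⟨_, 1, one_pos, rfl⟩ ?_) hB
  rintro _ ⟨r, hr, rfl⟩
  exact h r hr

noncomputable def enclosedMass (ρ : ℝ → ℝ) (r : ℝ) : ℝ :=
  4 * π * ∫ s in (0:ℝ)..r, s ^ 2 * ρ s

section EnclosedMass

variable {ρ : ℝ → ℝ} {r : ℝ}

theorem enclosedMass_nonneg (hρ : ∀ s > 0, 0 ≤ ρ s) (hr : 0 ≤ r) :
    0 ≤ enclosedMass ρ r := by
  refine mul_nonneg (by positivity) (intervalIntegral.integral_nonneg hr fun s hs => ?_)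
  rcases hs.1.eq_or_lt with rfl | hs0
  · simp
  · exact mul_nonneg (sq_nonneg s) (hρ s hs0)

theorem hasDerivAt_enclosedMass (hρ : ContinuousOn ρ (Ioi 0))
    (hint : IntervalIntegrable (fun s => s ^ 2 * ρ s) volume 0 r) (hr : 0 < r) :
    HasDerivAt (enclosedMass ρ) (4 * π * (r ^ 2 * ρ r)) r := by
  have hg : ContinuousOn (fun s => s ^ 2 * ρ s) (Ioi 0) := (continuousOn_pow 2).mul hρ
  exact (intervalIntegral.integral_hasDerivAt_right hint
    (hg.stronglyMeasurableAtFilter isOpen_Ioi r hr)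
    (hg.continuousAt (isOpen_Ioi.mem_nhds hr))).const_mul (4 * π)

theorem mul_deriv_enclosedMass_le (hρ : AntitoneOn ρ (Ioi 0))
    (hint : IntervalIntegrable (fun s => s ^ 2 * ρ s) volume 0 r) (hr : 0 < r) :
    r * (4 * π * (r ^ 2 * ρ r)) ≤ 3 * enclosedMass ρ r := by
  have hle : ∫ s in (0:ℝ)..r, s ^ 2 * ρ r ≤ ∫ s in (0:ℝ)..r, s ^ 2 * ρ s := by
    refine intervalIntegral.integral_mono_on hr.le
      (((continuous_pow 2).mul continuous_const).intervalIntegrable 0 r) hint fun s hs => ?_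
    rcases hs.1.eq_or_lt with rfl | hs0
    · simp
    · exact mul_le_mul_of_nonneg_left (hρ hs0 (hs0.trans_le hs.2) hs.2) (sq_nonneg s)
  rw [intervalIntegral.integral_mul_const, integral_pow] at hle
  rw [enclosedMass]
  nlinarith [pi_pos]

theorem enclosedMass_eq_of_le {R : ℝ} (hR : 0 ≤ R) (hRr : R ≤ r)
    (hρR : ∀ s ≥ R, ρ s = 0)
    (hint : IntervalIntegrable (fun s => s ^ 2 * ρ s) volume 0 r) :
    enclosedMass ρ r = enclosedMass ρ R := by
  have hzero : ∫ s in R..r, s ^ 2 * ρ s = 0 := by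
    rw [intervalIntegral.integral_congr (g := fun _ => 0) fun s hs => ?_,
      intervalIntegral.integral_zero]
    rw [uIcc_of_le hRr] at hs
    simp [hρR s hs.1]
  rw [enclosedMass, enclosedMass, ← intervalIntegral.integral_add_adjacent_intervals
    (hint.mono_set ?_) (hint.mono_set ?_), hzero, add_zero]
  · exact uIcc_subset_uIcc_left (mem_uIcc_of_le hR hRr)
  · exact uIcc_subset_uIcc_right (mem_uIcc_of_le hR hRr)

-- Where `s ^ 2 * ρ s` is not integrable at `0`, the Bochner integral takes the junk value `0`.
theorem intervalIntegrable_or_enclosedMass_eq_zero (hρ : ContinuousOn ρ (Ioi 0)) :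
    (∀ r > 0, IntervalIntegrable (fun s => s ^ 2 * ρ s) volume 0 r) ∨
      ∀ r > 0, enclosedMass ρ r = 0 := by
  have hg : ContinuousOn (fun s => s ^ 2 * ρ s) (Ioi 0) := (continuousOn_pow 2).mul hρ
  by_cases h1 : IntervalIntegrable (fun s => s ^ 2 * ρ s) volume 0 1
  · exact .inl fun r hr => h1.of_continuousOn_Ioi hg one_pos hr
  · refine .inr fun r hr => ?_
    rw [enclosedMass, mul_eq_zero]
    exact .inr (intervalIntegral.integral_undef fun h => h1 (h.of_continuousOn_Ioi hg hr one_pos))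

end EnclosedMass

noncomputable def metricLambda (m : ℝ → ℝ) (r : ℝ) : ℝ := -(1 / 2) * log (1 - 2 * m r / r)

section MetricLambda

variable {m : ℝ → ℝ} {r : ℝ}

theorem exp_two_mul_metricLambda (ht : 0 < 1 - 2 * m r / r) :
    exp (2 * metricLambda m r) = (1 - 2 * m r / r)⁻¹ := by
  rw [metricLambda, ← mul_assoc, show (2 : ℝ) * -(1 / 2) = -1 by norm_num, neg_one_mul,
    exp_neg, exp_log ht]

theorem exp_neg_metricLambda (ht : 0 < 1 - 2 * m r / r) :
    exp (-metricLambda m r) = √(1 - 2 * m r / r) := by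
  rw [metricLambda, sqrt_eq_rpow, rpow_def_of_pos ht]
  ring_nf

theorem hasDerivAt_metricLambda {m' : ℝ} (hm : HasDerivAt m m' r) (hr : r ≠ 0)
    (ht : 0 < 1 - 2 * m r / r) :
    HasDerivAt (metricLambda m) (exp (2 * metricLambda m r) * (m' / r - m r / r ^ 2)) r := by
  have := ((((hm.const_mul 2).div (hasDerivAt_id r) hr).const_sub 1).log ht.ne').const_mul
    (-(1 / 2))
  refine this.congr_deriv ?_
  simp only [id, Pi.div_apply, exp_two_mul_metricLambda ht]
  field_simp

end MetricLambda

noncomputable def buchdahlFn (lam μ μ' : ℝ → ℝ) (r : ℝ) : ℝ :=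
  exp (-lam r) * μ' r * exp (μ r) / r

theorem hasDerivAt_buchdahlFn {lam μ μ' : ℝ → ℝ} {r lam' μ'' : ℝ}
    (hlam : HasDerivAt lam lam' r) (hμ : HasDerivAt μ (μ' r) r) (hμ' : HasDerivAt μ' μ'' r)
    (hr : r ≠ 0) :
    HasDerivAt (buchdahlFn lam μ μ')
      (exp (-lam r) * exp (μ r) / r * (μ'' + μ' r ^ 2 - lam' * μ' r - μ' r / r)) r := by
  have := ((hlam.neg.exp.mul hμ').mul hμ.exp).div (hasDerivAt_id r) hr
  refine this.congr_deriv ?_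
  simp only [id, Pi.mul_apply, Pi.neg_apply]
  field_simp
  ring

theorem buchdahlFn_deriv_factor_nonpos {r l m m' p pT μ' μ'' lam' : ℝ} (hr : 0 < r)
    (hμ' : μ' = exp (2 * l) * (m / r ^ 2 + 4 * π * r * p))
    (hlam' : lam' = exp (2 * l) * (m' / r - m / r ^ 2))
    (hfield : exp (-2 * l) * (μ'' + (μ' + 1 / r) * (μ' - lam')) = 8 * π * pT)
    (hpT : pT ≤ p) (hm' : r * m' ≤ 3 * m) :
    μ'' + μ' ^ 2 - lam' * μ' - μ' / r ≤ 0 := by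
  have hμ'' : μ'' + μ' ^ 2 - lam' * μ' - μ' / r =
      8 * π * pT * exp (2 * l) + lam' / r - 2 * μ' / r := by
    have hE : exp (2 * l) * exp (-2 * l) = 1 := by rw [← exp_add]; simp
    linear_combination exp (2 * l) * hfield - (μ'' + (μ' + 1 / r) * (μ' - lam')) * hE
  have : lam' / r - 2 * μ' / r = exp (2 * l) * (-8 * π * p + (r * m' - 3 * m) / r ^ 3) := by
    rw [hμ', hlam']
    field_simp
    ring
  have hm'' : (r * m' - 3 * m) / r ^ 3 ≤ 0 :=
    div_nonpos_of_nonpos_of_nonneg (by linarith) (by positivity)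
  rw [hμ'', add_sub_assoc, this, mul_comm, ← mul_add]
  exact mul_nonpos_of_nonneg_of_nonpos (exp_pos _).le (by nlinarith [pi_pos])

theorem antitoneOn_buchdahlFn {lam μ μ' μ'' lam' m m' p pT : ℝ → ℝ}
    (hlam : ∀ r > 0, HasDerivAt lam (lam' r) r) (hμ : ∀ r > 0, HasDerivAt μ (μ' r) r)
    (hμ' : ∀ r > 0, HasDerivAt μ' (μ'' r) r)
    (hμ'_eq : ∀ r > 0, μ' r = exp (2 * lam r) * (m r / r ^ 2 + 4 * π * r * p r))
    (hlam'_eq : ∀ r > 0, lam' r = exp (2 * lam r) * (m' r / r - m r / r ^ 2))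
    (hfield : ∀ r > 0,
      exp (-2 * lam r) * (μ'' r + (μ' r + 1 / r) * (μ' r - lam' r)) = 8 * π * pT r)
    (hpT : ∀ r > 0, pT r ≤ p r) (hm' : ∀ r > 0, r * m' r ≤ 3 * m r) :
    AntitoneOn (buchdahlFn lam μ μ') (Ioi 0) :=
  antitoneOn_Ioi_of_hasDerivAt_nonpos
    (fun r hr => hasDerivAt_buchdahlFn (hlam r hr) (hμ r hr) (hμ' r hr) (ne_of_gt hr))
    fun r hr => mul_nonpos_of_nonneg_of_nonpos (by positivity)
      (buchdahlFn_deriv_factor_nonpos hr (hμ'_eq r hr) (hlam'_eq r hr) (hfield r hr)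
        (hpT r hr) (hm' r hr))

theorem buchdahlFn_div_mul_le_exp_sub_exp {lam μ μ' : ℝ → ℝ} {r k : ℝ} (hr : 0 < r)
    (hk : 0 < k) (hkr : k * r ^ 2 < 1) (hμ : ∀ s > 0, HasDerivAt μ (μ' s) s)
    (hμ0 : ContinuousWithinAt μ (Ioi 0) 0) (hf : AntitoneOn (buchdahlFn lam μ μ') (Ioi 0))
    (hfr : 0 ≤ buchdahlFn lam μ μ' r)
    (hlam : ∀ s ∈ Ioo 0 r, exp (-lam s) ≤ √(1 - k * s ^ 2)) :
    buchdahlFn lam μ μ' r / k * (1 - √(1 - k * r ^ 2)) ≤ exp (μ r) - exp (μ 0) := by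
  set F := buchdahlFn lam μ μ' r
  have hG : ∀ s ∈ Ioo 0 r, HasDerivAt (fun s => -(F / k) * √(1 - k * s ^ 2))
      (F * s / √(1 - k * s ^ 2)) s := by
    intro s hs
    have hq : 0 < 1 - k * s ^ 2 := by nlinarith [hs.1, hs.2]
    refine ((((hasDerivAt_pow 2 s).const_mul k).const_sub 1).sqrt hq.ne').const_mul _
      |>.congr_deriv ?_
    field_simp
    ring
  have hle : ∀ s ∈ Ioo 0 r, F * s / √(1 - k * s ^ 2) ≤ exp (μ s) * μ' s := by
    intro s hs
    have hFs : F ≤ buchdahlFn lam μ μ' s := hf hs.1 hr hs.2.le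
    calc F * s / √(1 - k * s ^ 2) ≤ F * s / exp (-lam s) :=
          div_le_div_of_nonneg_left (mul_nonneg hfr hs.1.le) (exp_pos _) (hlam s hs)
      _ ≤ buchdahlFn lam μ μ' s * s / exp (-lam s) := by have := hs.1.le; gcongr
      _ = exp (μ s) * μ' s := by rw [buchdahlFn]; field_simp [hs.1.ne']
  have := sub_le_sub_of_hasDerivAt_le hr.le (by fun_prop)
    (continuousOn_Icc_of_hasDerivAt hμ hμ0).rexp hG (fun s hs => (hμ s hs.1).exp) hle
  simp only [ne_eq, OfNat.ofNat_ne_zero, not_false_eq_true, zero_pow, mul_zero, sub_zero,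
    sqrt_one, mul_one] at this
  linarith

theorem exp_neg_metricLambda_le {m : ℝ → ℝ} {r s : ℝ} (hs : 0 < s) (hsr : s ≤ r)
    (hmc : AntitoneOn (fun s => m s / s ^ 3) (Ioi 0)) (ht : 0 < 1 - 2 * m s / s) :
    exp (-metricLambda m s) ≤ √(1 - 2 * m r / r ^ 3 * s ^ 2) := by
  rw [exp_neg_metricLambda ht]
  refine sqrt_le_sqrt ?_
  have hmono : m r / r ^ 3 ≤ m s / s ^ 3 := hmc hs (hs.trans_le hsr) hsr
  have hs' : 2 * m s / s = 2 * (m s / s ^ 3) * s ^ 2 := by field_simp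
  have hr' : 2 * m r / r ^ 3 * s ^ 2 = 2 * (m r / r ^ 3) * s ^ 2 := by ring
  nlinarith [mul_le_mul_of_nonneg_right hmono (sq_nonneg s)]

theorem buchdahl_pointwise {m μ μ' : ℝ → ℝ} {r : ℝ} (hr : 0 < r) (hmr : 0 < m r)
    (ht : ∀ s > 0, 0 < 1 - 2 * m s / s) (hmc : AntitoneOn (fun s => m s / s ^ 3) (Ioi 0))
    (hμ : ∀ s > 0, HasDerivAt μ (μ' s) s) (hμ0 : ContinuousWithinAt μ (Ioi 0) 0)
    (hf : AntitoneOn (buchdahlFn (metricLambda m) μ μ') (Ioi 0)) {p : ℝ} (hp : 0 ≤ p)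
    (hμ'r : μ' r = exp (2 * metricLambda m r) * (m r / r ^ 2 + 4 * π * r * p)) :
    2 * √(1 - 2 * m r / r) * exp (μ 0) ≤ exp (μ r) * (3 * √(1 - 2 * m r / r) - 1) := by
  set x := √(1 - 2 * m r / r)
  set k := 2 * m r / r ^ 3 with hk_def
  have htr := ht r hr
  have hx0 : 0 < x := sqrt_pos.2 htr
  have hx2 : x ^ 2 = 1 - 2 * m r / r := sq_sqrt htr.le
  have hx1 : x < 1 := by nlinarith [div_pos (mul_pos two_pos hmr) hr]
  have hk : 0 < k := by positivity
  have hkr : k * r ^ 2 = 2 * m r / r := by rw [hk_def]; field_simp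
  have hF : exp (μ r) * k / (2 * x) ≤ buchdahlFn (metricLambda m) μ μ' r := by
    have hμ'_lb : (1 - 2 * m r / r)⁻¹ * (m r / r ^ 2) ≤ μ' r := by
      rw [hμ'r, exp_two_mul_metricLambda htr]
      gcongr
      exact le_add_of_nonneg_right (by positivity)
    calc exp (μ r) * k / (2 * x)
          = x * ((1 - 2 * m r / r)⁻¹ * (m r / r ^ 2)) * exp (μ r) / r := by
          rw [← hx2, hk_def]; field_simp
      _ ≤ buchdahlFn (metricLambda m) μ μ' r := by
          rw [buchdahlFn, exp_neg_metricLambda htr]; gcongr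
  have hint := buchdahlFn_div_mul_le_exp_sub_exp hr hk (by linarith) hμ hμ0 hf
    ((by positivity : 0 ≤ exp (μ r) * k / (2 * x)).trans hF)
    (fun s hs => exp_neg_metricLambda_le hs.1 hs.2.le hmc (ht s hs.1))
  rw [hkr] at hint
  have : exp (μ r) * (1 - x) / (2 * x) ≤ exp (μ r) - exp (μ 0) := by
    calc exp (μ r) * (1 - x) / (2 * x) = exp (μ r) * k / (2 * x) / k * (1 - x) := by
          field_simp
      _ ≤ _ := by gcongr
      _ ≤ _ := hint
  rw [div_le_iff₀ (by positivity)] at this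
  linarith

theorem exists_lt_forall_two_mul_div_le {m ζ : ℝ → ℝ} {R c : ℝ} (hR : 0 < R) (hc : 0 < c)
    (hmR : ∀ r ≥ R, m r = m R) (ht : ∀ r > 0, 0 < 1 - 2 * m r / r)
    (hζ : MonotoneOn ζ (Ioi 0)) (hζ0 : ∀ r > 0, 0 < ζ r)
    (hpoint : ∀ r > 0, 0 < m r →
      2 * √(1 - 2 * m r / r) * c ≤ ζ r * (3 * √(1 - 2 * m r / r) - 1)) :
    ∃ B < 8 / 9, ∀ r > 0, 2 * m r / r ≤ B := by
  set r₁ := max R (3 * m R)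
  have hr₁ : 0 < r₁ := hR.trans_le (le_max_left _ _)
  -- `2xc ≤ ζ(3x - 1)` with `ζ ≤ ζ r₁` forces `x ≥ 1/3 + δ`.
  set δ := 2 * c / (9 * ζ r₁) with hδ_def
  have hδ : 0 < δ := div_pos (by positivity) (by linarith [hζ0 r₁ hr₁])
  refine ⟨max (2 / 3) (1 - (1 / 3 + δ) ^ 2), max_lt (by norm_num) (by nlinarith),
    fun r hr => ?_⟩
  rcases le_or_gt r₁ r with hr₁r | hrr₁
  · refine le_max_of_le_left ?_
    rw [hmR r ((le_max_left _ _).trans hr₁r), div_le_iff₀ hr]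
    linarith [(le_max_right R (3 * m R)).trans hr₁r]
  rcases le_or_gt (m r) 0 with hmr | hmr
  · exact le_max_of_le_left ((div_nonpos_of_nonpos_of_nonneg (by linarith) hr.le).trans
      (by norm_num))
  refine le_max_of_le_right ?_
  set x := √(1 - 2 * m r / r)
  have hx2 : x ^ 2 = 1 - 2 * m r / r := sq_sqrt (ht r hr).le
  have hx0 : 0 ≤ x := sqrt_nonneg _
  have hζr : ζ r ≤ ζ r₁ := hζ hr hr₁ hrr₁.le
  have hζr0 := hζ0 r hr
  have h := hpoint r hr hmr
  have hx3 : 1 / 3 ≤ x := by nlinarith [mul_nonneg hx0 hc.le]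
  have hδx : 1 / 3 + δ ≤ x := by
    have : 9 * ζ r₁ * δ = 2 * c := by rw [hδ_def]; field_simp [(hζ0 r₁ hr₁).ne']
    nlinarith [mul_le_mul_of_nonneg_right hζr (by linarith : 0 ≤ 3 * x - 1)]
  nlinarith [pow_le_pow_left₀ (by positivity) hδx 2]

theorem buchdahl_inequality_general
    (ρ p pT m lam μ μ' μ'' lam' : ℝ → ℝ)
    (hρ_cont : ContinuousOn ρ (Ioi 0))
    (hρ_nonneg : ∀ r > 0, 0 ≤ ρ r)
    (hρ_supp : ∃ R > 0, ∀ r ≥ R, ρ r = 0)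
    (hρ_mono : AntitoneOn ρ (Ioi 0))
    (hp_nonneg : ∀ r > 0, 0 ≤ p r)
    (hpT_le : ∀ r > 0, pT r ≤ p r)
    (hm : ∀ r, m r = 4 * π * ∫ s in (0:ℝ)..r, s ^ 2 * ρ s)
    (h2m : ∀ r > 0, 2 * m r < r)
    (hlam : ∀ r, lam r = -(1 / 2) * Real.log (1 - 2 * m r / r))
    (hμ' : ∀ r > 0, HasDerivAt μ (μ' r) r)
    (hμ'' : ∀ r > 0, HasDerivAt μ' (μ'' r) r)
    (hlam' : ∀ r > 0, HasDerivAt lam (lam' r) r)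
    (hfield1 : ∀ r > 0, μ' r = Real.exp (2 * lam r) * (m r / r ^ 2 + 4 * π * r * p r))
    (hfield2 : ∀ r > 0,
      Real.exp (-2 * lam r) * (μ'' r + (μ' r + 1 / r) * (μ' r - lam' r)) = 8 * π * pT r)
    (hμ0 : Tendsto μ (nhdsWithin 0 (Ioi 0)) (nhds (μ 0))) :
    sSup {x | ∃ r > 0, x = 2 * m r / r} < 8 / 9 := by
  obtain ⟨R, hR, hρR⟩ := hρ_supp
  obtain rfl : m = enclosedMass ρ := funext hm
  obtain rfl : lam = metricLambda (enclosedMass ρ) := funext hlam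
  rcases intervalIntegrable_or_enclosedMass_eq_zero hρ_cont with hint | hzero
  swap
  · exact sSup_setOf_pos_lt (by norm_num : (0 : ℝ) < 8 / 9) fun r hr => by simp [hzero r hr]
  have ht : ∀ r > 0, 0 < 1 - 2 * enclosedMass ρ r / r := fun r hr => by
    rw [sub_pos, div_lt_one hr]; exact h2m r hr
  have hmass' := fun r hr => hasDerivAt_enclosedMass hρ_cont (hint r hr) hr
  have hmass'_le := fun r hr => mul_deriv_enclosedMass_le hρ_mono (hint r hr) hr
  have hlam'_eq := fun r hr =>
    (hlam' r hr).unique (hasDerivAt_metricLambda (hmass' r hr) (ne_of_gt hr) (ht r hr))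
  have hf := antitoneOn_buchdahlFn hlam' hμ' hμ'' hfield1 hlam'_eq hfield2 hpT_le hmass'_le
  have hμ_mono : MonotoneOn μ (Ioi 0) := monotoneOn_Ioi_of_hasDerivAt_nonneg hμ' fun r hr => by
    have := hp_nonneg r hr
    have := enclosedMass_nonneg hρ_nonneg hr.le
    rw [hfield1 r hr]
    positivity
  obtain ⟨B, hB, hle⟩ := exists_lt_forall_two_mul_div_le (m := enclosedMass ρ) hR
    (exp_pos (μ 0))
    (fun r hr => enclosedMass_eq_of_le hR.le hr hρR (hint r (hR.trans_le hr))) ht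
    (exp_monotone.comp_monotoneOn hμ_mono) (fun _ _ => exp_pos _) fun r hr hmr =>
      buchdahl_pointwise hr hmr ht
        (antitoneOn_div_pow_of_mul_deriv_le 3 hmass' fun r hr => by
          exact_mod_cast hmass'_le r hr)
        hμ' hμ0 hf (hp_nonneg r hr) (hfield1 r hr)
  exact sSup_setOf_pos_lt hB hle

/-- The Buchdahl inequality `sup_{r>0} 2m(r)/r < 8/9` for static, spherically symmetric
configurations with non-increasing energy density and `p_T ≤ p`. -/
theorem buchdahl_inequality
    (ρ p pT m lam μ μ' μ'' lam' : ℝ → ℝ)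
    (hρ_cont : ContinuousOn ρ (Ioi 0))
    (hρ_nonneg : ∀ r > 0, 0 ≤ ρ r)
    (hρ_supp : ∃ R > 0, ∀ r ≥ R, ρ r = 0)
    (hρ_ne : ∃ r > 0, ρ r ≠ 0)
    (hρ_mono : AntitoneOn ρ (Ioi 0))
    (hp_cont : ContinuousOn p (Ioi 0)) (hp_nonneg : ∀ r > 0, 0 ≤ p r)
    (hpT_cont : ContinuousOn pT (Ioi 0)) (hpT_nonneg : ∀ r > 0, 0 ≤ pT r)
    (hpT_le : ∀ r > 0, pT r ≤ p r)
    (hm : ∀ r, m r = 4 * π * ∫ s in (0:ℝ)..r, s ^ 2 * ρ s)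
    (h2m : ∀ r > 0, 2 * m r < r)
    (hlam : ∀ r, lam r = -(1 / 2) * Real.log (1 - 2 * m r / r))
    (hμ' : ∀ r > 0, HasDerivAt μ (μ' r) r)
    (hμ'' : ∀ r > 0, HasDerivAt μ' (μ'' r) r)
    (hμ''_cont : ContinuousOn μ'' (Ioi 0))
    (hlam' : ∀ r > 0, HasDerivAt lam (lam' r) r)
    (hfield1 : ∀ r > 0, μ' r = Real.exp (2 * lam r) * (m r / r ^ 2 + 4 * π * r * p r))
    (hfield2 : ∀ r > 0,
      Real.exp (-2 * lam r) * (μ'' r + (μ' r + 1 / r) * (μ' r - lam' r)) = 8 * π * pT r)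
    (hμ0 : Tendsto μ (nhdsWithin 0 (Ioi 0)) (nhds (μ 0))) :
    sSup {x | ∃ r > 0, x = 2 * m r / r} < 8 / 9 :=
  buchdahl_inequality_general ρ p pT m lam μ μ' μ'' lam' hρ_cont hρ_nonneg hρ_supp hρ_mono hp_nonneg
    hpT_le hm h2m hlam hμ' hμ'' hlam' hfield1 hfield2 hμ0
end

section
/- Let ρ, p, p_T : (0,∞) → [0,∞) be continuous with ρ compactly supported, not identically zero, and non-increasing, and p_T(r) ≤ p(r) for all r > 0. Let m(r) = 4π ∫₀^r s² ρ(s) ds with 2m(r) < r for r > 0, let λ(r) = −(1/2)·log(1 − 2m(r)/r), and let μ ∈ C²((0,∞)), continuous at 0, satisfy μ′(r) = e^{2λ(r)}( m(r)/r² + 4π r p(r) ), the field equation e^{−2λ}( μ″ + (μ′ + 1/r)(μ′ − λ′) ) = 8π p_T, and the asymptotic flatness condition lim_{r→∞} μ(r) = 0. Then for every r > 0 one has e^{μ(r)} − e^{μ(0)} ≥ (1/2) e^{μ(r)} ( e^{λ(r)} − 1 ), and consequently sup_{r>0} 2m(r)/r ≤ 1 − 1/(3 − 2e^{μ(0)})².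 -/
/-!
Buchdahl's argument. Because `ρ` is non-increasing, the mean density `m(r)/r³` is non-increasing
and bounds `4πρ(r)/3` from above; with `p_T ≤ p` the field equations then make the Buchdahl
function `F = e^{μ-λ} μ'/r` non-increasing. For `0 < s ≤ r` this gives
`(e^μ)'(s) = s e^{λ(s)} F(s) ≥ F(r) s / √(1 - c s²)` with `c = 2m(r)/r³`, and integration over
`[0, r]` yields `e^{μ(r)} - e^{μ(0)} ≥ (F(r)/c)(1 - e^{-λ(r)}) ≥ ½ e^{μ(r)} (e^{λ(r)} - 1)`,
the last step by the first field equation. Since `μ ≤ 0`, this forces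
`e^{λ(r)} ≤ 3 - 2e^{μ(0)}`, which is the compactness bound.
-/

open Real MeasureTheory Filter Topology Set

theorem intervalIntegrable_zero_of_continuousOn_Ioi {g : ℝ → ℝ} (hg : ContinuousOn g (Ioi 0))
    {a b : ℝ} (ha : 0 < a) (hb : 0 < b) (h : IntervalIntegrable g volume 0 a) :
    IntervalIntegrable g volume 0 b :=
  h.trans <| (hg.mono fun _ hx => (lt_min ha hb).trans_le hx.1).intervalIntegrable

noncomputable def massFunction (ρ : ℝ → ℝ) (r : ℝ) : ℝ :=
  4 * π * ∫ s in (0 : ℝ)..r, s ^ 2 * ρ s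

section massFunction

variable {ρ : ℝ → ℝ}

theorem massFunction_nonneg (hρ : ∀ r > 0, 0 ≤ ρ r) {r : ℝ} (hr : 0 ≤ r) :
    0 ≤ massFunction ρ r := by
  refine mul_nonneg (by positivity) (intervalIntegral.integral_nonneg hr fun s hs => ?_)
  rcases hs.1.eq_or_lt with rfl | hs0
  · simp
  · exact mul_nonneg (sq_nonneg s) (hρ s hs0)

theorem hasDerivAt_massFunction (hρ : ContinuousOn ρ (Ioi 0)) {x : ℝ}
    (hint : IntervalIntegrable (fun s => s ^ 2 * ρ s) volume 0 x) (hx : 0 < x) :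
    HasDerivAt (massFunction ρ) (4 * π * (x ^ 2 * ρ x)) x := by
  have hf : ContinuousOn (fun s => s ^ 2 * ρ s) (Ioi 0) := (continuousOn_pow 2).mul hρ
  exact (intervalIntegral.integral_hasDerivAt_right hint
    (hf.stronglyMeasurableAtFilter isOpen_Ioi x hx) (hf.continuousAt (Ioi_mem_nhds hx))).const_mul _

theorem integral_sq_mul_le {a b C : ℝ} (hab : a ≤ b)
    (hint : IntervalIntegrable (fun s => s ^ 2 * ρ s) volume a b) (hρ : ∀ s ∈ Ioo a b, ρ s ≤ C) :
    ∫ s in a..b, s ^ 2 * ρ s ≤ C * ((b ^ 3 - a ^ 3) / 3) := by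
  calc ∫ s in a..b, s ^ 2 * ρ s ≤ ∫ s in a..b, s ^ 2 * C :=
        intervalIntegral.integral_mono_on_of_le_Ioo hab hint
          (((continuous_pow 2).mul continuous_const).intervalIntegrable _ _)
          fun s hs => mul_le_mul_of_nonneg_left (hρ s hs) (sq_nonneg s)
    _ = C * ((b ^ 3 - a ^ 3) / 3) := by
        rw [intervalIntegral.integral_mul_const, integral_pow]; ring

theorem le_integral_sq_mul {a b C : ℝ} (hab : a ≤ b)
    (hint : IntervalIntegrable (fun s => s ^ 2 * ρ s) volume a b) (hρ : ∀ s ∈ Ioo a b, C ≤ ρ s) :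
    C * ((b ^ 3 - a ^ 3) / 3) ≤ ∫ s in a..b, s ^ 2 * ρ s := by
  calc C * ((b ^ 3 - a ^ 3) / 3) = ∫ s in a..b, s ^ 2 * C := by
        rw [intervalIntegral.integral_mul_const, integral_pow]; ring
    _ ≤ ∫ s in a..b, s ^ 2 * ρ s :=
        intervalIntegral.integral_mono_on_of_le_Ioo hab
          (((continuous_pow 2).mul continuous_const).intervalIntegrable _ _) hint
          fun s hs => mul_le_mul_of_nonneg_left (hρ s hs) (sq_nonneg s)

theorem density_le_massFunction_div_cube (hρ : AntitoneOn ρ (Ioi 0)) {r : ℝ} (hr : 0 < r)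
    (hint : IntervalIntegrable (fun s => s ^ 2 * ρ s) volume 0 r) :
    4 * π / 3 * ρ r ≤ massFunction ρ r / r ^ 3 := by
  have h := le_integral_sq_mul hr.le hint fun s hs => hρ hs.1 hr hs.2.le
  rw [le_div_iff₀ (by positivity), massFunction]
  nlinarith [pi_pos]

theorem massFunction_div_cube_antitoneOn (hρ : AntitoneOn ρ (Ioi 0))
    (hint : ∀ r > 0, IntervalIntegrable (fun s => s ^ 2 * ρ s) volume 0 r) :
    AntitoneOn (fun r => massFunction ρ r / r ^ 3) (Ioi 0) := by
  intro x (hx : 0 < x) y (hy : 0 < y) hxy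
  have hshell_int : IntervalIntegrable (fun s => s ^ 2 * ρ s) volume x y :=
    (hint x hx).symm.trans (hint y hy)
  have hsplit : massFunction ρ y = massFunction ρ x + 4 * π * ∫ s in x..y, s ^ 2 * ρ s := by
    rw [massFunction, massFunction, ← mul_add,
      intervalIntegral.integral_add_adjacent_intervals (hint x hx) hshell_int]
  have hshell := integral_sq_mul_le hxy hshell_int fun s hs => hρ hx (hx.trans hs.1) hs.1.le
  have hcore := mul_le_mul_of_nonneg_right (density_le_massFunction_div_cube hρ hx (hint x hx))
    (sub_nonneg.2 (pow_le_pow_left₀ hx.le hxy 3))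
  rw [div_le_iff₀ (by positivity)]
  calc massFunction ρ y ≤ massFunction ρ x + 4 * π / 3 * ρ x * (y ^ 3 - x ^ 3) := by
        have := mul_le_mul_of_nonneg_left hshell (by positivity : (0 : ℝ) ≤ 4 * π)
        linarith
    _ ≤ massFunction ρ x + massFunction ρ x / x ^ 3 * (y ^ 3 - x ^ 3) := by linarith
    _ = massFunction ρ x / x ^ 3 * y ^ 3 := by field_simp; ring

-- A non-integrable density makes the Bochner integral, hence `massFunction ρ`, vanish.
theorem intervalIntegrable_of_massFunction_ne_zero (hρ : ContinuousOn ρ (Ioi 0))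
    {r : ℝ} (hr : 0 < r) (h : massFunction ρ r ≠ 0) :
    ∀ x > 0, IntervalIntegrable (fun s => s ^ 2 * ρ s) volume 0 x := fun x hx =>
  intervalIntegrable_zero_of_continuousOn_Ioi (g := fun s => s ^ 2 * ρ s)
    ((continuousOn_pow 2).mul hρ) hr hx <| by
    by_contra hint
    exact h (by rw [massFunction, intervalIntegral.integral_undef hint, mul_zero])

end massFunction

theorem mul_exp_neg_two_mul_eq_of_hasDerivAt {ρ lam : ℝ → ℝ} (hρ : ContinuousOn ρ (Ioi 0))
    {x l : ℝ} (hx : 0 < x)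
    (hint : IntervalIntegrable (fun s => s ^ 2 * ρ s) volume 0 x)
    (hexp : ∀ r > 0, exp (-(2 * lam r)) = 1 - 2 * massFunction ρ r / r)
    (hl : HasDerivAt lam l x) :
    l * exp (-(2 * lam x)) = 4 * π * x * ρ x - massFunction ρ x / x ^ 2 := by
  have hlhs := ((hl.const_mul 2).neg).exp
  have hrhs := (((hasDerivAt_massFunction hρ hint hx).const_mul 2).div (hasDerivAt_id x)
    hx.ne').const_sub 1
  have heq := hlhs.unique (hrhs.congr_of_eventuallyEq (eventually_of_mem (Ioi_mem_nhds hx) hexp))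
  simp only [Pi.neg_apply, id] at heq
  field_simp at heq
  field_simp
  linear_combination -heq

noncomputable def buchdahlFunction (μ lam μ' : ℝ → ℝ) (r : ℝ) : ℝ :=
  exp (μ r - lam r) * μ' r / r

theorem buchdahlFunction_antitoneOn {ρ p pT lam μ μ' μ'' lam' : ℝ → ℝ}
    (hρ_cont : ContinuousOn ρ (Ioi 0)) (hρ_anti : AntitoneOn ρ (Ioi 0))
    (hint : ∀ r > 0, IntervalIntegrable (fun s => s ^ 2 * ρ s) volume 0 r)
    (hpT_le : ∀ r > 0, pT r ≤ p r)
    (hexp : ∀ r > 0, exp (-(2 * lam r)) = 1 - 2 * massFunction ρ r / r)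
    (hμ' : ∀ r > 0, HasDerivAt μ (μ' r) r) (hμ'' : ∀ r > 0, HasDerivAt μ' (μ'' r) r)
    (hlam' : ∀ r > 0, HasDerivAt lam (lam' r) r)
    (hfield1 : ∀ r > 0,
      μ' r = exp (2 * lam r) * (massFunction ρ r / r ^ 2 + 4 * π * r * p r))
    (hfield2 : ∀ r > 0,
      exp (-2 * lam r) * (μ'' r + (μ' r + 1 / r) * (μ' r - lam' r)) = 8 * π * pT r) :
    AntitoneOn (buchdahlFunction μ lam μ') (Ioi 0) := by
  have hderiv : ∀ x > 0, HasDerivAt (buchdahlFunction μ lam μ')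
      (exp (μ x - lam x) * (μ'' x + μ' x ^ 2 - lam' x * μ' x - μ' x / x) / x) x := by
    intro x hx
    refine ((((hμ' x hx).sub (hlam' x hx)).exp.mul (hμ'' x hx)).div (hasDerivAt_id x)
      hx.ne').congr_deriv ?_
    simp only [id, Pi.mul_apply, Pi.sub_apply]
    field_simp
    ring
  refine antitoneOn_of_hasDerivWithinAt_nonpos (convex_Ioi 0)
    (fun x hx => (hderiv x hx).continuousAt.continuousWithinAt)
    (fun x hx => (hderiv x (interior_subset hx)).hasDerivWithinAt) fun x hx => ?_
  rw [interior_Ioi] at hx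
  have hx : 0 < x := hx
  set E := exp (2 * lam x)
  set M := massFunction ρ x
  have hE : exp (-(2 * lam x)) = E⁻¹ := exp_neg _
  have hlam'_eq : lam' x = E * (4 * π * x * ρ x - M / x ^ 2) := by
    rw [← mul_exp_neg_two_mul_eq_of_hasDerivAt hρ_cont hx (hint x hx) hexp (hlam' x hx), hE,
      mul_comm (lam' x), mul_inv_cancel_left₀ (exp_pos _).ne']
  have hfield2' := hfield2 x hx
  rw [neg_mul, hE, inv_mul_eq_iff_eq_mul₀ (exp_pos _).ne'] at hfield2'
  have hbracket : μ'' x + μ' x ^ 2 - lam' x * μ' x - μ' x / x =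
      E * (8 * π * (pT x - p x) + (4 * π * ρ x - 3 * (M / x ^ 3))) := by
    rw [eq_sub_of_add_eq hfield2', hfield1 x hx, hlam'_eq]
    field_simp
    ring
  have hdeficit : 8 * π * (pT x - p x) + (4 * π * ρ x - 3 * (M / x ^ 3)) ≤ 0 := by
    have := density_le_massFunction_div_cube hρ_anti hx (hint x hx)
    have := hpT_le x hx
    nlinarith [pi_pos]
  rw [hbracket]
  exact div_nonpos_of_nonpos_of_nonneg
    (mul_nonpos_of_nonneg_of_nonpos (exp_pos _).le
      (mul_nonpos_of_nonneg_of_nonpos (exp_pos _).le hdeficit)) hx.le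

theorem mul_one_sub_sqrt_le_sub {g g' : ℝ → ℝ} {K c r : ℝ} (hr : 0 ≤ r) (hc : 0 < c)
    (hcr : c * r ^ 2 ≤ 1) (hg : ContinuousOn g (Icc 0 r))
    (hg' : ∀ s ∈ Ioo 0 r, HasDerivAt g (g' s) s)
    (hle : ∀ s ∈ Ioo 0 r, K * s / √(1 - c * s ^ 2) ≤ g' s) :
    K / c * (1 - √(1 - c * r ^ 2)) ≤ g r - g 0 := by
  have hmono : MonotoneOn (fun s => g s + K / c * √(1 - c * s ^ 2)) (Icc 0 r) := by
    refine monotoneOn_of_hasDerivWithinAt_nonneg (convex_Icc 0 r) (hg.add (by fun_prop))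
      (f' := fun s => g' s - K * s / √(1 - c * s ^ 2)) (fun s hs => ?_) fun s hs => ?_
    · rw [interior_Icc] at hs
      have hpos : 0 < 1 - c * s ^ 2 := by
        nlinarith [mul_lt_mul_of_pos_left (pow_lt_pow_left₀ hs.2 hs.1.le two_ne_zero) hc]
      have hsqrt := ((((hasDerivAt_pow 2 s).const_mul c).const_sub 1).sqrt hpos.ne').const_mul
        (K / c)
      refine ((hg' s hs).add hsqrt).hasDerivWithinAt.congr_deriv ?_
      field_simp
      ring
    · rw [interior_Icc] at hs
      exact sub_nonneg.2 (hle s hs)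
  have h0r : g 0 + K / c * √(1 - c * 0 ^ 2) ≤ g r + K / c * √(1 - c * r ^ 2) :=
    hmono ⟨le_rfl, hr⟩ ⟨hr, le_rfl⟩ hr
  rw [zero_pow two_ne_zero, mul_zero, sub_zero, sqrt_one, mul_one] at h0r
  linarith

theorem half_mul_exp_mul_exp_sub_one_le {m p lam μ μ' : ℝ → ℝ} {r : ℝ} (hr : 0 < r)
    (hmr : 0 < m r) (hm : AntitoneOn (fun r => m r / r ^ 3) (Ioi 0))
    (hF : AntitoneOn (buchdahlFunction μ lam μ') (Ioi 0))
    (hexp : ∀ r > 0, exp (-(2 * lam r)) = 1 - 2 * m r / r)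
    (hμ' : ∀ r > 0, HasDerivAt μ (μ' r) r) (hμ0 : ContinuousWithinAt μ (Ioi 0) 0)
    (hfield1 : μ' r = exp (2 * lam r) * (m r / r ^ 2 + 4 * π * r * p r)) (hp : 0 ≤ p r) :
    1 / 2 * exp (μ r) * (exp (lam r) - 1) ≤ exp (μ r) - exp (μ 0) := by
  set c := 2 * m r / r ^ 3
  set K := buchdahlFunction μ lam μ' r
  have hsqrt : ∀ s > 0, √(1 - 2 * m s / s) = exp (-lam s) := fun s hs => by
    rw [← hexp s hs, ← exp_half]; ring_nf
  have hcr : c * r ^ 2 = 2 * m r / r := by simp only [c]; field_simp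
  have hK : K = exp (μ r + lam r) * (m r / r ^ 3 + 4 * π * p r) := by
    rw [show μ r + lam r = (μ r - lam r) + 2 * lam r by ring, exp_add]
    simp only [K, buchdahlFunction, hfield1]
    field_simp
  have hK0 : 0 ≤ K := by rw [hK]; positivity
  have hcont : ContinuousOn μ (Icc 0 r) := fun s hs => by
    rcases hs.1.eq_or_lt with rfl | hs0
    · exact (continuousWithinAt_Ioi_iff_Ici.1 hμ0).mono Icc_subset_Ici_self
    · exact (hμ' s hs0).continuousAt.continuousWithinAt
  have hintegrated : K / c * (1 - exp (-lam r)) ≤ exp (μ r) - exp (μ 0) := by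
    rw [← hsqrt r hr, ← hcr]
    refine mul_one_sub_sqrt_le_sub hr.le (by positivity)
      (by linarith [hexp r hr ▸ exp_pos (-(2 * lam r))]) hcont.rexp
      (fun s hs => (hμ' s hs.1).exp) fun s hs => ?_
    have hs0 : 0 < s := hs.1
    have hcs : c * s ^ 2 ≤ 2 * m s / s :=
      calc c * s ^ 2 = 2 * (m r / r ^ 3) * s ^ 2 := by simp only [c]; ring
        _ ≤ 2 * (m s / s ^ 3) * s ^ 2 := by
          have := hm hs0 hr hs.2.le
          simp only at this
          nlinarith [sq_nonneg s]
        _ = 2 * m s / s := by field_simp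
    calc K * s / √(1 - c * s ^ 2) ≤ K * s / exp (-lam s) :=
          div_le_div_of_nonneg_left (mul_nonneg hK0 hs0.le) (exp_pos _)
            (hsqrt s hs0 ▸ sqrt_le_sqrt (by linarith))
      _ = K * s * exp (lam s) := by rw [exp_neg, div_inv_eq_mul]
      _ ≤ buchdahlFunction μ lam μ' s * s * exp (lam s) := by
          gcongr
          exact hF hs0 hr hs.2.le
      _ = exp (μ s) * μ' s := by
          simp only [buchdahlFunction]
          rw [exp_sub]
          field_simp
  have hKc : exp (μ r + lam r) / 2 ≤ K / c := by
    rw [le_div_iff₀ (by positivity), hK,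
      show exp (μ r + lam r) / 2 * c = exp (μ r + lam r) * (m r / r ^ 3) by simp only [c]; ring]
    gcongr
    exact le_add_of_nonneg_right (by positivity)
  have hlam : 0 ≤ 1 - exp (-lam r) := by
    rw [← hsqrt r hr, sub_nonneg]
    exact sqrt_le_one.2 (by have := div_pos (mul_pos two_pos hmr) hr; linarith)
  calc 1 / 2 * exp (μ r) * (exp (lam r) - 1) = exp (μ r + lam r) / 2 * (1 - exp (-lam r)) := by
        rw [exp_add, exp_neg]
        field_simp
    _ ≤ K / c * (1 - exp (-lam r)) := mul_le_mul_of_nonneg_right hKc hlam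
    _ ≤ exp (μ r) - exp (μ 0) := hintegrated

theorem le_one_sub_inv_sq_of_half_mul_le {a b L x : ℝ} (hb : b ≤ 0)
    (h : 1 / 2 * exp b * (exp L - 1) ≤ exp b - exp a) (hx : exp (-(2 * L)) = 1 - x) :
    x ≤ 1 - 1 / (3 - 2 * exp a) ^ 2 := by
  have hb1 := exp_le_one_iff.2 hb
  have ha0 := exp_pos a
  have hb0 := exp_pos b
  have hL : 0 < 3 - exp L := by nlinarith
  have hbound : exp L ≤ 3 - 2 * exp a := by nlinarith [mul_nonneg (sub_nonneg.2 hb1) hL.le]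
  have hinv : 1 / (3 - 2 * exp a) ^ 2 ≤ exp (-(2 * L)) := by
    rw [show -(2 * L) = -L * 2 by ring, exp_mul, exp_neg, rpow_two, inv_pow, ← one_div]
    exact one_div_le_one_div_of_le (by positivity) (pow_le_pow_left₀ (exp_pos L).le hbound 2)
  linarith

theorem buchdahl_sharpened_general
    (ρ p pT m lam μ μ' μ'' lam' : ℝ → ℝ)
    (hρ_cont : ContinuousOn ρ (Ioi 0))
    (hρ_nonneg : ∀ r > 0, 0 ≤ ρ r)
    (hρ_mono : AntitoneOn ρ (Ioi 0))
    (hp_nonneg : ∀ r > 0, 0 ≤ p r)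
    (hpT_le : ∀ r > 0, pT r ≤ p r)
    (hm : ∀ r, m r = 4 * π * ∫ s in (0:ℝ)..r, s ^ 2 * ρ s)
    (h2m : ∀ r > 0, 2 * m r < r)
    (hlam : ∀ r, lam r = -(1 / 2) * Real.log (1 - 2 * m r / r))
    (hμ' : ∀ r > 0, HasDerivAt μ (μ' r) r)
    (hμ'' : ∀ r > 0, HasDerivAt μ' (μ'' r) r)
    (hlam' : ∀ r > 0, HasDerivAt lam (lam' r) r)
    (hfield1 : ∀ r > 0, μ' r = Real.exp (2 * lam r) * (m r / r ^ 2 + 4 * π * r * p r))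
    (hfield2 : ∀ r > 0,
      Real.exp (-2 * lam r) * (μ'' r + (μ' r + 1 / r) * (μ' r - lam' r)) = 8 * π * pT r)
    (hμ0 : Tendsto μ (nhdsWithin 0 (Ioi 0)) (nhds (μ 0)))
    (hμ_flat : Tendsto μ atTop (nhds 0)) :
    (∀ r > 0, Real.exp (μ r) - Real.exp (μ 0) ≥
      1 / 2 * Real.exp (μ r) * (Real.exp (lam r) - 1)) ∧
    sSup {x | ∃ r > 0, x = 2 * m r / r} ≤ 1 - 1 / (3 - 2 * Real.exp (μ 0)) ^ 2 := by
  obtain rfl : m = massFunction ρ := funext hm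
  have hexp : ∀ r > 0, exp (-(2 * lam r)) = 1 - 2 * massFunction ρ r / r := fun r hr => by
    rw [hlam r, show -(2 * (-(1 / 2) * log (1 - 2 * massFunction ρ r / r))) =
      log (1 - 2 * massFunction ρ r / r) by ring]
    exact exp_log (sub_pos.2 ((div_lt_one hr).2 (h2m r hr)))
  have hμ_mono : MonotoneOn μ (Ioi 0) :=
    monotoneOn_of_hasDerivWithinAt_nonneg (convex_Ioi 0)
      (fun x hx => (hμ' x hx).continuousAt.continuousWithinAt)
      (fun x hx => (hμ' x (interior_subset hx)).hasDerivWithinAt) fun x hx => by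
        rw [interior_Ioi] at hx
        rw [hfield1 x hx]
        exact mul_nonneg (exp_pos _).le (add_nonneg
          (div_nonneg (massFunction_nonneg hρ_nonneg (le_of_lt hx)) (sq_nonneg x))
          (mul_nonneg (mul_nonneg (by positivity) (le_of_lt hx)) (hp_nonneg x hx)))
  have hμ0_le : ∀ r > 0, μ 0 ≤ μ r := fun r hr =>
    le_of_tendsto hμ0 (eventually_of_mem (Ioo_mem_nhdsGT hr) fun s hs => hμ_mono hs.1 hr hs.2.le)
  have hμ_nonpos : ∀ r > 0, μ r ≤ 0 := fun r hr =>
    ge_of_tendsto hμ_flat ((eventually_ge_atTop r).mono fun s hs => hμ_mono hr (hr.trans_le hs) hs)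
  have hbound : ∀ r > 0, 1 / 2 * exp (μ r) * (exp (lam r) - 1) ≤ exp (μ r) - exp (μ 0) := by
    intro r hr
    rcases (massFunction_nonneg hρ_nonneg hr.le).eq_or_lt with hm0 | hm0
    · simpa [hlam r, ← hm0] using hμ0_le r hr
    · have hint := intervalIntegrable_of_massFunction_ne_zero hρ_cont hr hm0.ne'
      exact half_mul_exp_mul_exp_sub_one_le hr hm0 (massFunction_div_cube_antitoneOn hρ_mono hint)
        (buchdahlFunction_antitoneOn hρ_cont hρ_mono hint hpT_le hexp hμ' hμ'' hlam' hfield1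
          hfield2)
        hexp hμ' hμ0 (hfield1 r hr) (hp_nonneg r hr)
  refine ⟨hbound, csSup_le ⟨_, 1, one_pos, rfl⟩ ?_⟩
  rintro _ ⟨r, hr, rfl⟩
  exact le_one_sub_inv_sq_of_half_mul_le (hμ_nonpos r hr) (hbound r hr) (hexp r hr)

/-- The sharpened Buchdahl-type estimate:
`e^{μ(r)} - e^{μ(0)} ≥ (1/2) e^{μ(r)} (e^{λ(r)} - 1)` and consequently
`sup_{r>0} 2m(r)/r ≤ 1 - 1/(3 - 2 e^{μ(0)})²`. -/
theorem buchdahl_sharpened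
    (ρ p pT m lam μ μ' μ'' lam' : ℝ → ℝ)
    (hρ_cont : ContinuousOn ρ (Ioi 0))
    (hρ_nonneg : ∀ r > 0, 0 ≤ ρ r)
    (hρ_supp : ∃ R > 0, ∀ r ≥ R, ρ r = 0)
    (hρ_ne : ∃ r > 0, ρ r ≠ 0)
    (hρ_mono : AntitoneOn ρ (Ioi 0))
    (hp_cont : ContinuousOn p (Ioi 0)) (hp_nonneg : ∀ r > 0, 0 ≤ p r)
    (hpT_cont : ContinuousOn pT (Ioi 0)) (hpT_nonneg : ∀ r > 0, 0 ≤ pT r)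
    (hpT_le : ∀ r > 0, pT r ≤ p r)
    (hm : ∀ r, m r = 4 * π * ∫ s in (0:ℝ)..r, s ^ 2 * ρ s)
    (h2m : ∀ r > 0, 2 * m r < r)
    (hlam : ∀ r, lam r = -(1 / 2) * Real.log (1 - 2 * m r / r))
    (hμ' : ∀ r > 0, HasDerivAt μ (μ' r) r)
    (hμ'' : ∀ r > 0, HasDerivAt μ' (μ'' r) r)
    (hμ''_cont : ContinuousOn μ'' (Ioi 0))
    (hlam' : ∀ r > 0, HasDerivAt lam (lam' r) r)
    (hfield1 : ∀ r > 0, μ' r = Real.exp (2 * lam r) * (m r / r ^ 2 + 4 * π * r * p r))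
    (hfield2 : ∀ r > 0,
      Real.exp (-2 * lam r) * (μ'' r + (μ' r + 1 / r) * (μ' r - lam' r)) = 8 * π * pT r)
    (hμ0 : Tendsto μ (nhdsWithin 0 (Ioi 0)) (nhds (μ 0)))
    (hμ_flat : Tendsto μ atTop (nhds 0)) :
    (∀ r > 0, Real.exp (μ r) - Real.exp (μ 0) ≥
      1 / 2 * Real.exp (μ r) * (Real.exp (lam r) - 1)) ∧
    sSup {x | ∃ r > 0, x = 2 * m r / r} ≤ 1 - 1 / (3 - 2 * Real.exp (μ 0)) ^ 2 :=
  buchdahl_sharpened_general ρ p pT m lam μ μ' μ'' lam' hρ_cont hρ_nonneg hρ_mono hp_nonneg hpT_le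
    hm h2m hlam hμ' hμ'' hlam' hfield1 hfield2 hμ0 hμ_flat
end

section
/- Let l > 0 and let ρ̃, p̃ : [0,∞) → [0,∞) be continuous with ρ̃(0) > 0. Define ρ(r) = r^{2l} ρ̃(r), p(r) = r^{2l} p̃(r), p_T(r) = (l+1) p(r), and m(r) = 4π ∫₀^r s² ρ(s) ds. Then lim_{r→0+} r^{−2l} ( ρ(r) + 2 p_T(r) − (3/(4π)) m(r)/r³ − 2 p(r) ) = ρ̃(0) + 2l p̃(0) − (3/(3+2l)) ρ̃(0), and this limit is strictly positive. In particular ρ(r) + 2 p_T(r) − (3/(4π)) m(r)/r³ − 2 p(r) > 0 for all sufficiently small r > 0. -/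
open Real MeasureTheory Filter Topology Set

private lemma cont_rpow_const {a : ℝ} (ha : 0 < a) : Continuous fun s : ℝ => s ^ a := by
  apply continuous_iff_continuousAt.mpr
  intro x
  exact Real.continuousAt_rpow_const x a (Or.inr ha.le)

/-- key integral limit -/
private lemma key_integral_limit (a : ℝ) (ha : 0 < a) (f : ℝ → ℝ)
    (hf : ContinuousOn f (Ici 0)) :
    Tendsto (fun r => (∫ s in (0:ℝ)..r, s ^ a * f s) / r ^ (a + 1))
      (nhdsWithin 0 (Ioi 0)) (nhds (f 0 / (a + 1))) := by
  have hA : (0:ℝ) < a + 1 := by linarith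
  rw [Metric.tendsto_nhdsWithin_nhds]
  intro ε hε
  have hc : ContinuousWithinAt f (Ici 0) 0 := hf 0 self_mem_Ici
  rw [Metric.continuousWithinAt_iff] at hc
  obtain ⟨δ, hδ, hδ'⟩ := hc (ε / 2) (by linarith)
  refine ⟨δ, hδ, ?_⟩
  intro r hr hrd
  simp only [mem_Ioi] at hr
  rw [Real.dist_eq, sub_zero, abs_of_pos hr] at hrd
  -- bounds on f on [0, r]
  have hbound : ∀ s ∈ Icc (0:ℝ) r, f 0 - ε/2 ≤ f s ∧ f s ≤ f 0 + ε/2 := by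
    intro s hs
    have h1 : s ∈ Ici (0:ℝ) := hs.1
    have h2 : dist s 0 < δ := by
      rw [Real.dist_eq, sub_zero, abs_of_nonneg hs.1]
      exact lt_of_le_of_lt hs.2 hrd
    have := hδ' h1 h2
    rw [Real.dist_eq] at this
    constructor <;> [skip; skip] <;> cases' abs_lt.mp this with h3 h4 <;> linarith
  have hcontp : Continuous fun s : ℝ => s ^ a := cont_rpow_const ha
  have hint1 : IntervalIntegrable (fun s => s ^ a * f s) volume 0 r := by
    apply ContinuousOn.intervalIntegrable
    rw [uIcc_of_le hr.le]
    exact (hcontp.continuousOn).mul (hf.mono (Icc_subset_Ici_self))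
  have hint2 : ∀ c : ℝ, IntervalIntegrable (fun s => s ^ a * c) volume 0 r := by
    intro c
    exact (hcontp.mul continuous_const).intervalIntegrable 0 r
  have hival : ∀ c : ℝ, (∫ s in (0:ℝ)..r, s ^ a * c) = c * r ^ (a+1) / (a+1) := by
    intro c
    rw [intervalIntegral.integral_mul_const, integral_rpow (Or.inl (by linarith))]
    rw [Real.zero_rpow (by linarith)]
    ring
  have hub : (∫ s in (0:ℝ)..r, s ^ a * f s) ≤ (f 0 + ε/2) * r ^ (a+1) / (a+1) := by
    rw [← hival (f 0 + ε/2)]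
    apply intervalIntegral.integral_mono_on hr.le hint1 (hint2 _)
    intro s hs
    exact mul_le_mul_of_nonneg_left (hbound s hs).2 (Real.rpow_nonneg hs.1 a)
  have hlb : (f 0 - ε/2) * r ^ (a+1) / (a+1) ≤ ∫ s in (0:ℝ)..r, s ^ a * f s := by
    rw [← hival (f 0 - ε/2)]
    apply intervalIntegral.integral_mono_on hr.le (hint2 _) hint1
    intro s hs
    exact mul_le_mul_of_nonneg_left (hbound s hs).1 (Real.rpow_nonneg hs.1 a)
  have ht : (0:ℝ) < r ^ (a+1) := Real.rpow_pos_of_pos hr _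
  rw [Real.dist_eq]
  have h1 : (∫ s in (0:ℝ)..r, s ^ a * f s) / r ^ (a+1) ≤ (f 0 + ε/2) / (a+1) := by
    rw [div_le_div_iff₀ ht hA]
    calc (∫ s in (0:ℝ)..r, s ^ a * f s) * (a+1) ≤ ((f 0 + ε/2) * r ^ (a+1) / (a+1)) * (a+1) := by
          exact mul_le_mul_of_nonneg_right hub hA.le
      _ = (f 0 + ε/2) * r ^ (a+1) := by field_simp
  have h2 : (f 0 - ε/2) / (a+1) ≤ (∫ s in (0:ℝ)..r, s ^ a * f s) / r ^ (a+1) := by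
    rw [div_le_div_iff₀ hA ht]
    calc (f 0 - ε/2) * r ^ (a+1) = ((f 0 - ε/2) * r ^ (a+1) / (a+1)) * (a+1) := by field_simp
      _ ≤ (∫ s in (0:ℝ)..r, s ^ a * f s) * (a+1) := mul_le_mul_of_nonneg_right hlb hA.le
  have hεd : ε / 2 / (a+1) < ε := by
    rw [div_lt_iff₀ hA]
    nlinarith
  rw [abs_lt]
  constructor
  · have : (f 0 - ε/2)/(a+1) = f 0/(a+1) - (ε/2)/(a+1) := by ring
    nlinarith [h2, this]
  · have : (f 0 + ε/2)/(a+1) = f 0/(a+1) + (ε/2)/(a+1) := by ring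
    nlinarith [h1, this]

/-- For anisotropic states with `ρ(r) = r^{2l} ρ̃(r)`, `p(r) = r^{2l} p̃(r)`, `p_T = (l+1)p`,
the combination `ρ + 2p_T − (3/(4π)) m/r³ − 2p`, rescaled by `r^{−2l}`, has the positive limit
`ρ̃(0) + 2l p̃(0) − 3/(3+2l) ρ̃(0)` as `r → 0+`; in particular it is positive near `0`. -/
theorem anisotropic_positivity_near_center
    (l : ℝ) (hl : 0 < l)
    (ρt pt : ℝ → ℝ)
    (hρt_cont : ContinuousOn ρt (Ici 0)) (hpt_cont : ContinuousOn pt (Ici 0))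
    (hρt_nonneg : ∀ r ≥ 0, 0 ≤ ρt r) (hpt_nonneg : ∀ r ≥ 0, 0 ≤ pt r)
    (hρt0 : 0 < ρt 0)
    (ρ p pT m : ℝ → ℝ)
    (hρ : ∀ r, ρ r = r ^ (2 * l) * ρt r)
    (hp : ∀ r, p r = r ^ (2 * l) * pt r)
    (hpT : ∀ r, pT r = (l + 1) * p r)
    (hm : ∀ r, m r = 4 * π * ∫ s in (0:ℝ)..r, s ^ 2 * ρ s) :
    Tendsto (fun r => r ^ (-(2 * l)) *
        (ρ r + 2 * pT r - 3 / (4 * π) * (m r / r ^ 3) - 2 * p r))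
      (nhdsWithin 0 (Ioi 0))
      (nhds (ρt 0 + 2 * l * pt 0 - 3 / (3 + 2 * l) * ρt 0)) ∧
    0 < ρt 0 + 2 * l * pt 0 - 3 / (3 + 2 * l) * ρt 0 ∧
    ∃ ε > 0, ∀ r, 0 < r → r < ε →
      0 < ρ r + 2 * pT r - 3 / (4 * π) * (m r / r ^ 3) - 2 * p r := by
  set a : ℝ := 2 + 2 * l with ha_def
  have ha : 0 < a := by simp [ha_def]; linarith
  have hl2 : (0:ℝ) < 2 * l := by linarith
  -- rewrite the inner integral
  have hint_eq : ∀ r : ℝ, 0 ≤ r →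
      (∫ s in (0:ℝ)..r, s ^ 2 * ρ s) = ∫ s in (0:ℝ)..r, s ^ a * ρt s := by
    intro r hr
    apply intervalIntegral.integral_congr
    intro s hs
    rw [uIcc_of_le hr] at hs
    rcases eq_or_lt_of_le hs.1 with h | h
    · show s ^ 2 * ρ s = s ^ a * ρt s
      simp only [← h, hρ]
      rw [Real.zero_rpow (by linarith), Real.zero_rpow (by positivity)]
      ring
    · show s ^ 2 * ρ s = s ^ a * ρt s
      rw [hρ, ha_def, Real.rpow_add h]
      rw [show ((2:ℝ)) = ((2:ℕ):ℝ) by norm_num, Real.rpow_natCast]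
      ring
  -- the simplified form on Ioi 0
  have heq : ∀ r : ℝ, 0 < r →
      r ^ (-(2 * l)) * (ρ r + 2 * pT r - 3 / (4 * π) * (m r / r ^ 3) - 2 * p r)
        = ρt r + 2 * l * pt r - 3 * ((∫ s in (0:ℝ)..r, s ^ a * ρt s) / r ^ (a + 1)) := by
    intro r hr
    rw [hρ, hp, hpT, hp, hm, hint_eq r hr.le]
    have hne : r ^ (2 * l) ≠ 0 := ne_of_gt (Real.rpow_pos_of_pos hr _)
    have hrn : r ^ (-(2 * l)) = (r ^ (2 * l))⁻¹ := Real.rpow_neg hr.le _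
    have hpow : r ^ (a + 1) = r ^ 3 * r ^ (2 * l) := by
      rw [ha_def, show (2:ℝ) + 2 * l + 1 = (3:ℝ) + 2 * l by ring, Real.rpow_add hr]
      rw [show ((3:ℝ)) = ((3:ℕ):ℝ) by norm_num, Real.rpow_natCast]
    have h3 : (r:ℝ) ^ 3 ≠ 0 := by positivity
    have hπ : π ≠ 0 := Real.pi_ne_zero
    rw [hrn, hpow]
    field_simp
    ring
  have hA1 : a + 1 = 3 + 2 * l := by rw [ha_def]; ring
  -- tendsto of the simplified form
  have hρ_lim : Tendsto ρt (nhdsWithin 0 (Ioi 0)) (nhds (ρt 0)) :=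
    (hρt_cont 0 self_mem_Ici).mono_left (nhdsWithin_mono 0 Ioi_subset_Ici_self)
  have hp_lim : Tendsto pt (nhdsWithin 0 (Ioi 0)) (nhds (pt 0)) :=
    (hpt_cont 0 self_mem_Ici).mono_left (nhdsWithin_mono 0 Ioi_subset_Ici_self)
  have hkey := key_integral_limit a ha ρt hρt_cont
  have hT : Tendsto (fun r => r ^ (-(2 * l)) *
        (ρ r + 2 * pT r - 3 / (4 * π) * (m r / r ^ 3) - 2 * p r))
      (nhdsWithin 0 (Ioi 0))
      (nhds (ρt 0 + 2 * l * pt 0 - 3 / (3 + 2 * l) * ρt 0)) := by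
    have hT' : Tendsto (fun r => ρt r + 2 * l * pt r -
          3 * ((∫ s in (0:ℝ)..r, s ^ a * ρt s) / r ^ (a + 1)))
        (nhdsWithin 0 (Ioi 0))
        (nhds (ρt 0 + 2 * l * pt 0 - 3 * (ρt 0 / (a + 1)))) :=
      ((hρ_lim.add ((tendsto_const_nhds).mul hp_lim)).sub ((tendsto_const_nhds).mul hkey))
    have hval : ρt 0 + 2 * l * pt 0 - 3 * (ρt 0 / (a + 1))
        = ρt 0 + 2 * l * pt 0 - 3 / (3 + 2 * l) * ρt 0 := by
      rw [hA1]; ring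
    rw [hval] at hT'
    apply hT'.congr'
    filter_upwards [self_mem_nhdsWithin] with r hr
    exact (heq r hr).symm
  have hpos : 0 < ρt 0 + 2 * l * pt 0 - 3 / (3 + 2 * l) * ρt 0 := by
    have h3 : (0:ℝ) < 3 + 2 * l := by linarith
    have hd : 3 / (3 + 2 * l) < 1 := by
      rw [div_lt_one h3]; linarith
    have hpt0 : 0 ≤ pt 0 := hpt_nonneg 0 le_rfl
    nlinarith
  refine ⟨hT, hpos, ?_⟩
  have hev : ∀ᶠ r in nhdsWithin 0 (Ioi 0), 0 < r ^ (-(2 * l)) *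
      (ρ r + 2 * pT r - 3 / (4 * π) * (m r / r ^ 3) - 2 * p r) :=
    hT.eventually (eventually_gt_nhds hpos)
  obtain ⟨ε, hε, hsub⟩ := Metric.mem_nhdsWithin_iff.mp hev
  refine ⟨ε, hε, ?_⟩
  intro r hr hrε
  have hmem : r ∈ Metric.ball (0:ℝ) ε ∩ Ioi 0 := by
    constructor
    · rw [Metric.mem_ball, Real.dist_eq, sub_zero, abs_of_pos hr]; exact hrε
    · exact mem_Ioi.mpr hr
  have h := hsub hmem
  have hc : 0 < r ^ (-(2 * l)) := Real.rpow_pos_of_pos hr _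
  simp only [mem_setOf_eq] at h
  by_contra hcon
  push_neg at hcon
  nlinarith [mul_nonpos_of_nonneg_of_nonpos hc.le hcon]
end

section
/- Let φ : (0,∞) → [0,∞) be measurable with φ(η) = 0 for η > 1 and φ(η) = c(1−η)^k + O((1−η)^{k+δ}) as η → 1−, where c > 0, δ > 0 and k > −1/2. Define h_j(y) = ∫_y^1 φ(η)(η² − y²)^j dη for y ∈ [0,1). Then lim_{y→1−} h_{1/2}(y) / ( h_{3/2}(y) )^{1/2} = 0. -/
open Real MeasureTheory Filter Topology Set Asymptotics

/-- `h_j(y) = ∫_y^1 φ(η)(η² − y²)^j dη`. -/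
noncomputable def hfun (φ : ℝ → ℝ) (j y : ℝ) : ℝ :=
  ∫ η in y..1, φ η * (η ^ 2 - y ^ 2) ^ j

lemma ii_one_sub_rpow {k : ℝ} (hk : -1 < k) (a b : ℝ) :
    IntervalIntegrable (fun η => (1 - η) ^ k) volume a b := by
  have := (intervalIntegral.intervalIntegrable_rpow' (a := 1 - a) (b := 1 - b) hk).comp_sub_left 1
  simpa using this

lemma int_one_sub_rpow {k : ℝ} (hk : -1 < k) (a : ℝ) :
    ∫ η in a..1, (1 - η) ^ k = (1 - a) ^ (k + 1) / (k + 1) := by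
  have h := intervalIntegral.integral_comp_sub_left (a := a) (b := 1) (fun x => x ^ k) 1
  rw [h, integral_rpow (Or.inl hk)]
  rw [sub_self, Real.zero_rpow (by linarith)]
  ring

lemma ae_ne_one (s : Set ℝ) : ∀ᵐ η ∂(volume.restrict s), η ≠ (1:ℝ) := by
  refine ae_restrict_of_ae ?_
  rw [ae_iff]
  refine measure_mono_null (fun x hx => ?_) (measure_singleton (1:ℝ))
  simpa using hx

lemma integrand_ii (φ : ℝ → ℝ) (hm : Measurable φ) {M k : ℝ} (hk : -1 < k)
    (j : ℝ) (hj : 0 ≤ j) {y a : ℝ} (hy : 0 ≤ y) (hya : y ≤ a) (ha : a ≤ 1)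
    (hb : ∀ η, a < η → η < 1 → |φ η| ≤ M * (1 - η) ^ k) :
    IntervalIntegrable (fun η => φ η * (η ^ 2 - y ^ 2) ^ j) volume a 1 := by
  have hMk : IntervalIntegrable (fun η => M * (1 - η) ^ k) volume a 1 :=
    (ii_one_sub_rpow hk a 1).const_mul M
  refine hMk.mono_fun' ?_ ?_
  · exact (hm.mul ((Real.continuous_rpow_const hj).measurable.comp ((measurable_id.pow_const 2).sub measurable_const))).aestronglyMeasurable
  · rw [uIoc_of_le ha]
    filter_upwards [ae_restrict_mem measurableSet_Ioc, ae_ne_one (Ioc a 1)] with η hη hne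
    have hη1 : η < 1 := lt_of_le_of_ne hη.2 hne
    have h0 : (0:ℝ) ≤ η ^ 2 - y ^ 2 := by nlinarith [hη.1, hya.trans_lt hη.1]
    have hηpos : (0:ℝ) < η := lt_of_le_of_lt (hy.trans hya) hη.1
    have h1 : (η ^ 2 - y ^ 2) ^ j ≤ 1 := by
      apply Real.rpow_le_one h0 (by nlinarith [hη.2, sq_nonneg y, hηpos]) hj
    calc ‖φ η * (η ^ 2 - y ^ 2) ^ j‖ = |φ η| * ((η ^ 2 - y ^ 2) ^ j) := by
          rw [norm_mul, Real.norm_eq_abs, Real.norm_eq_abs,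
            abs_of_nonneg (Real.rpow_nonneg h0 j)]
      _ ≤ (M * (1 - η) ^ k) * 1 := by
          apply mul_le_mul (hb η hη.1 hη1) h1 (Real.rpow_nonneg h0 j)
          exact (abs_nonneg _).trans (hb η hη.1 hη1)
      _ = M * (1 - η) ^ k := mul_one _

lemma hfun_upper {φ : ℝ → ℝ} (hm : Measurable φ) {c k : ℝ} (hc : 0 < c) (hk : -1 < k)
    {y₀ : ℝ} (hy₀ : 1/2 ≤ y₀)
    (hub : ∀ η, y₀ < η → η < 1 → |φ η| ≤ (3*c/2) * (1-η)^k)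
    {y : ℝ} (hy : y₀ < y) (hy1 : y < 1) :
    hfun φ (1/2) y ≤ ((3*c/2) * ((2:ℝ)^((1:ℝ)/2) * (1-y)^((1:ℝ)/2))) * ((1-y)^(k+1)/(k+1)) := by
  have hy0 : (0:ℝ) ≤ y := by linarith
  have hBnn : (0:ℝ) ≤ (2:ℝ)^((1:ℝ)/2) * (1-y)^((1:ℝ)/2) :=
    mul_nonneg (Real.rpow_nonneg (by norm_num) _) (Real.rpow_nonneg (by linarith) _)
  have hI1 : IntervalIntegrable (fun η => φ η * (η ^ 2 - y ^ 2) ^ ((1:ℝ)/2)) volume y 1 :=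
    integrand_ii φ hm hk _ (by norm_num) hy0 le_rfl hy1.le
      (fun η h1 h2 => hub η (hy.trans h1) h2)
  have hI2 : IntervalIntegrable
      (fun η => ((3*c/2) * ((2:ℝ)^((1:ℝ)/2) * (1-y)^((1:ℝ)/2))) * (1-η)^k) volume y 1 :=
    (ii_one_sub_rpow hk y 1).const_mul _
  have hmono : hfun φ (1/2) y ≤
      ∫ η in y..1, ((3*c/2) * ((2:ℝ)^((1:ℝ)/2) * (1-y)^((1:ℝ)/2))) * (1-η)^k := by
    rw [hfun, show ((1:ℝ)/2) = ((1:ℝ)/2) from rfl]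
    refine intervalIntegral.integral_mono_ae_restrict hy1.le hI1 hI2 ?_
    filter_upwards [ae_restrict_mem measurableSet_Icc, ae_ne_one (Icc y 1)] with η hη hne
    have hη1 : η < 1 := lt_of_le_of_ne hη.2 hne
    have h0 : (0:ℝ) ≤ η ^ 2 - y ^ 2 := by nlinarith [hη.1]
    have hb1 : φ η ≤ (3*c/2) * (1-η)^k :=
      (le_abs_self _).trans (hub η (hy.trans_le hη.1) hη1)
    have hb2 : (η ^ 2 - y ^ 2) ^ ((1:ℝ)/2) ≤ (2:ℝ)^((1:ℝ)/2) * (1-y)^((1:ℝ)/2) := by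
      rw [← Real.mul_rpow (by norm_num) (by linarith)]
      exact Real.rpow_le_rpow h0 (by nlinarith [hη.1, hη.2]) (by norm_num)
    calc φ η * (η ^ 2 - y ^ 2) ^ ((1:ℝ)/2)
        ≤ ((3*c/2) * (1-η)^k) * ((2:ℝ)^((1:ℝ)/2) * (1-y)^((1:ℝ)/2)) := by
          refine mul_le_mul hb1 hb2 (Real.rpow_nonneg h0 _) ?_
          exact mul_nonneg (by positivity) (Real.rpow_nonneg (by linarith) _)
      _ = ((3*c/2) * ((2:ℝ)^((1:ℝ)/2) * (1-y)^((1:ℝ)/2))) * (1-η)^k := by ring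
  calc hfun φ (1/2) y ≤ _ := hmono
    _ = ((3*c/2) * ((2:ℝ)^((1:ℝ)/2) * (1-y)^((1:ℝ)/2))) * ((1-y)^(k+1)/(k+1)) := by
        rw [intervalIntegral.integral_const_mul, int_one_sub_rpow hk]

lemma hfun_lower {φ : ℝ → ℝ} (hm : Measurable φ) {c k : ℝ} (hc : 0 < c) (hk : -1 < k)
    {y₀ : ℝ} (hy₀ : 1/2 ≤ y₀) (hnn : ∀ η > 0, 0 ≤ φ η)
    (hub : ∀ η, y₀ < η → η < 1 → |φ η| ≤ (3*c/2) * (1-η)^k)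
    (hlbb : ∀ η, y₀ < η → η < 1 → (c/2) * (1-η)^k ≤ φ η)
    {y : ℝ} (hy : y₀ < y) (hy1 : y < 1) :
    (c/2) * ((1-y)/2)^((3:ℝ)/2) * (((1-y)/2)^(k+1)/(k+1)) ≤ hfun φ (3/2) y := by
  set m : ℝ := (1+y)/2 with hm_def
  have hy0 : (0:ℝ) < y := by linarith
  have hym : y < m := by rw [hm_def]; linarith
  have hm1 : m < 1 := by rw [hm_def]; linarith
  have hI : IntervalIntegrable (fun η => φ η * (η ^ 2 - y ^ 2) ^ ((3:ℝ)/2)) volume y 1 :=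
    integrand_ii φ hm hk _ (by norm_num) hy0.le le_rfl hy1.le
      (fun η h1 h2 => hub η (hy.trans h1) h2)
  have hIym : IntervalIntegrable (fun η => φ η * (η ^ 2 - y ^ 2) ^ ((3:ℝ)/2)) volume y m :=
    hI.mono_set (by rw [uIcc_of_le hym.le, uIcc_of_le hy1.le]; exact Icc_subset_Icc le_rfl hm1.le)
  have hIm1 : IntervalIntegrable (fun η => φ η * (η ^ 2 - y ^ 2) ^ ((3:ℝ)/2)) volume m 1 :=
    hI.mono_set (by rw [uIcc_of_le hm1.le, uIcc_of_le hy1.le]; exact Icc_subset_Icc hym.le le_rfl)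
  have hsplit : hfun φ (3/2) y =
      (∫ η in y..m, φ η * (η ^ 2 - y ^ 2) ^ ((3:ℝ)/2)) +
      (∫ η in m..1, φ η * (η ^ 2 - y ^ 2) ^ ((3:ℝ)/2)) := by
    rw [hfun]
    norm_num
    exact (intervalIntegral.integral_add_adjacent_intervals hIym hIm1).symm
  have h1nn : 0 ≤ ∫ η in y..m, φ η * (η ^ 2 - y ^ 2) ^ ((3:ℝ)/2) := by
    refine intervalIntegral.integral_nonneg hym.le (fun η hη => ?_)
    have : (0:ℝ) < η := lt_of_lt_of_le hy0 hη.1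
    exact mul_nonneg (hnn η this) (Real.rpow_nonneg (by nlinarith [hη.1]) _)
  have hIc : IntervalIntegrable (fun η => ((c/2) * ((1-y)/2)^((3:ℝ)/2)) * (1-η)^k) volume m 1 :=
    (ii_one_sub_rpow hk m 1).const_mul _
  have h2 : (∫ η in m..1, ((c/2) * ((1-y)/2)^((3:ℝ)/2)) * (1-η)^k) ≤
      ∫ η in m..1, φ η * (η ^ 2 - y ^ 2) ^ ((3:ℝ)/2) := by
    refine intervalIntegral.integral_mono_ae_restrict hm1.le hIc hIm1 ?_
    filter_upwards [ae_restrict_mem measurableSet_Icc, ae_ne_one (Icc m 1)] with η hη hne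
    have hη1 : η < 1 := lt_of_le_of_ne hη.2 hne
    have hηy₀ : y₀ < η := hy.trans (hym.trans_le hη.1)
    have hb1 : (c/2) * (1-η)^k ≤ φ η := hlbb η hηy₀ hη1
    have hbase : ((1-y)/2 : ℝ) ≤ η ^ 2 - y ^ 2 := by
      have h1 : m ≤ η := hη.1
      rw [hm_def] at h1
      nlinarith
    have hb2 : ((1-y)/2 : ℝ)^((3:ℝ)/2) ≤ (η ^ 2 - y ^ 2) ^ ((3:ℝ)/2) :=
      Real.rpow_le_rpow (by linarith) hbase (by norm_num)
    calc ((c/2) * ((1-y)/2)^((3:ℝ)/2)) * (1-η)^k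
        = ((c/2) * (1-η)^k) * ((1-y)/2)^((3:ℝ)/2) := by ring
      _ ≤ φ η * (η ^ 2 - y ^ 2) ^ ((3:ℝ)/2) := by
          refine mul_le_mul hb1 hb2 (Real.rpow_nonneg (by linarith) _) ?_
          exact hnn η (by linarith [hηy₀, hy₀])
  have hval : (∫ η in m..1, ((c/2) * ((1-y)/2)^((3:ℝ)/2)) * (1-η)^k) =
      (c/2) * ((1-y)/2)^((3:ℝ)/2) * (((1-y)/2)^(k+1)/(k+1)) := by
    rw [intervalIntegral.integral_const_mul, int_one_sub_rpow hk]
    congr 2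
    rw [hm_def]; ring
  rw [hsplit]
  linarith [h2, hval ▸ h2]

/-- The low-density limit `h_{1/2}(y)/(h_{3/2}(y))^{1/2} → 0` as `y → 1−`. -/
theorem low_density_limit
    (c δ k : ℝ) (hc : 0 < c) (hδ : 0 < δ) (hk : -(1 / 2) < k)
    (φ : ℝ → ℝ) (hφ_meas : Measurable φ) (hφ_nonneg : ∀ η > 0, 0 ≤ φ η)
    (hφ_zero : ∀ η > 1, φ η = 0)
    (hφ_asym : (fun η => φ η - c * (1 - η) ^ k)
      =O[nhdsWithin 1 (Iio 1)] fun η => (1 - η) ^ (k + δ)) :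
    Tendsto (fun y => hfun φ (1 / 2) y / (hfun φ (3 / 2) y) ^ ((1:ℝ) / 2))
      (nhdsWithin 1 (Iio 1)) (nhds 0) := by
  have hk' : (-1 : ℝ) < k := by linarith
  have hk1 : (0:ℝ) < k + 1 := by linarith
  -- extract big-O constant
  obtain ⟨C, hC0, hCb⟩ := hφ_asym.exists_pos
  rw [IsBigOWith_def] at hCb
  have hCb' := eventually_nhdsWithin_iff.mp hCb
  obtain ⟨ε, hε0, hεb⟩ := Metric.eventually_nhds_iff.mp hCb'
  set ρ : ℝ := (c / (2 * C)) ^ δ⁻¹ with hρ_def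
  have hρ0 : 0 < ρ := Real.rpow_pos_of_pos (by positivity) _
  set y₀ : ℝ := max (max (1 - ε) (1 - ρ)) (1/2) with hy₀_def
  have hy₀1 : y₀ < 1 := by
    apply max_lt (max_lt (by linarith) (by linarith)) (by norm_num)
  have hy₀h : (1:ℝ)/2 ≤ y₀ := le_max_right _ _
  -- pointwise bounds on φ near 1
  have hbounds : ∀ η, y₀ < η → η < 1 →
      (c/2) * (1-η)^k ≤ φ η ∧ φ η ≤ (3*c/2) * (1-η)^k := by
    intro η h1 h2
    have hηε : 1 - ε < η := lt_of_le_of_lt (le_trans (le_max_left _ _) (le_max_left _ _)) h1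
    have hηρ : 1 - ρ < η := lt_of_le_of_lt (le_trans (le_max_right _ _) (le_max_left _ _)) h1
    have hd : dist η 1 < ε := by
      rw [Real.dist_eq, abs_of_nonpos (by linarith)]; linarith
    have hb := hεb hd h2
    rw [Real.norm_eq_abs, Real.norm_eq_abs] at hb
    have h1η : (0:ℝ) < 1 - η := by linarith
    have habs : |(1 - η) ^ (k + δ)| = (1-η)^k * (1-η)^δ := by
      rw [abs_of_nonneg (Real.rpow_nonneg h1η.le _), Real.rpow_add h1η]
    rw [habs] at hb
    have hδle : (1-η)^δ ≤ c / (2*C) := by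
      have : (1-η)^δ ≤ ρ^δ := Real.rpow_le_rpow h1η.le (by linarith) hδ.le
      rwa [hρ_def, Real.rpow_inv_rpow (by positivity) hδ.ne'] at this
    have hkey : C * ((1-η)^k * (1-η)^δ) ≤ (c/2) * (1-η)^k := by
      have hknn : (0:ℝ) ≤ (1-η)^k := Real.rpow_nonneg h1η.le _
      calc C * ((1-η)^k * (1-η)^δ) = ((1-η)^δ * C) * (1-η)^k := by ring
        _ ≤ (c / (2*C) * C) * (1-η)^k := by
            apply mul_le_mul_of_nonneg_right (mul_le_mul_of_nonneg_right hδle hC0.le) hknn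
        _ = (c/2) * (1-η)^k := by field_simp
    have habs2 := abs_le.mp hb
    constructor
    · nlinarith [habs2.1, hkey]
    · nlinarith [habs2.2, hkey]
  have hub : ∀ η, y₀ < η → η < 1 → |φ η| ≤ (3*c/2) * (1-η)^k := by
    intro η h1 h2
    rw [abs_of_nonneg (hφ_nonneg η (by linarith [hy₀h.trans h1.le]))]
    exact (hbounds η h1 h2).2
  have hlbb : ∀ η, y₀ < η → η < 1 → (c/2) * (1-η)^k ≤ φ η :=
    fun η h1 h2 => (hbounds η h1 h2).1
  -- constants
  set K₁ : ℝ := (3*c/2) * (2:ℝ)^((1:ℝ)/2) / (k+1) with hK₁_def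
  set K₂ : ℝ := (c/2) * ((1:ℝ)/2)^((3:ℝ)/2) * (((1:ℝ)/2)^(k+1)/(k+1)) with hK₂_def
  have hK₂0 : 0 < K₂ := by
    apply mul_pos (mul_pos (by linarith) (Real.rpow_pos_of_pos (by norm_num) _))
    exact div_pos (Real.rpow_pos_of_pos (by norm_num) _) hk1
  set K₃ : ℝ := K₁ / K₂ ^ ((1:ℝ)/2) with hK₃_def
  -- the key bound on the ratio
  have hkey : ∀ y, y₀ < y → y < 1 →
      0 ≤ hfun φ (1/2) y / (hfun φ (3/2) y) ^ ((1:ℝ)/2) ∧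
      hfun φ (1/2) y / (hfun φ (3/2) y) ^ ((1:ℝ)/2) ≤ K₃ * (1-y)^((2*k+1)/4) := by
    intro y hy hy1
    have hy0 : (0:ℝ) < y := by linarith [hy₀h.trans hy.le]
    have hεy : (0:ℝ) < 1 - y := by linarith
    -- upper bound on numerator
    have hN : hfun φ (1/2) y ≤ K₁ * (1-y)^(k + 3/2) := by
      refine (hfun_upper hφ_meas hc hk' hy₀h hub hy hy1).trans_eq ?_
      rw [hK₁_def]
      rw [show (1-y)^(k+3/2) = (1-y)^((1:ℝ)/2) * (1-y)^(k+1) by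
        rw [← Real.rpow_add hεy]; ring_nf]
      field_simp
    have hNnn : 0 ≤ hfun φ (1/2) y := by
      refine intervalIntegral.integral_nonneg hy1.le (fun η hη => ?_)
      exact mul_nonneg (hφ_nonneg η (lt_of_lt_of_le hy0 hη.1))
        (Real.rpow_nonneg (by nlinarith [hη.1, hy0]) _)
    -- lower bound on denominator
    have hD : K₂ * (1-y)^(k + 5/2) ≤ hfun φ (3/2) y := by
      refine le_trans (le_of_eq ?_) (hfun_lower hφ_meas hc hk' hy₀h hφ_nonneg hub hlbb hy hy1)
      rw [hK₂_def]
      rw [show ((1-y)/2 : ℝ) = (1-y) * (1/2) by ring,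
        Real.mul_rpow hεy.le (by norm_num), Real.mul_rpow hεy.le (by norm_num)]
      rw [show (1-y)^(k+5/2) = (1-y)^((3:ℝ)/2) * (1-y)^(k+1) by
        rw [← Real.rpow_add hεy]; ring_nf]
      field_simp
    have hDpos : (0:ℝ) < K₂ * (1-y)^(k + 5/2) :=
      mul_pos hK₂0 (Real.rpow_pos_of_pos hεy _)
    have hDpos2 : (0:ℝ) < (hfun φ (3/2) y) ^ ((1:ℝ)/2) :=
      Real.rpow_pos_of_pos (hDpos.trans_le hD) _
    constructor
    · exact div_nonneg hNnn hDpos2.le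
    · have hstep : hfun φ (1/2) y / (hfun φ (3/2) y) ^ ((1:ℝ)/2) ≤
          (K₁ * (1-y)^(k + 3/2)) / (K₂ * (1-y)^(k + 5/2)) ^ ((1:ℝ)/2) := by
        refine div_le_div₀ (by positivity) hN (Real.rpow_pos_of_pos hDpos _) ?_
        exact Real.rpow_le_rpow hDpos.le hD (by norm_num)
      refine hstep.trans_eq ?_
      have hSpos : (0:ℝ) < K₂ ^ ((1:ℝ)/2) := Real.rpow_pos_of_pos hK₂0 _
      have hBpos : (0:ℝ) < (1-y) ^ ((k + 5/2) * ((1:ℝ)/2)) := Real.rpow_pos_of_pos hεy _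
      rw [Real.mul_rpow hK₂0.le (Real.rpow_nonneg hεy.le _), ← Real.rpow_mul hεy.le]
      rw [show k + 3/2 = (2*k+1)/4 + (k + 5/2) * ((1:ℝ)/2) by ring, Real.rpow_add hεy]
      rw [hK₃_def]
      field_simp
  -- squeeze
  have hmem : Ioo y₀ 1 ∈ nhdsWithin 1 (Iio 1) :=
    Ioo_mem_nhdsLT_of_mem ⟨hy₀1, le_rfl⟩
  have htend : Tendsto (fun y => K₃ * (1-y)^((2*k+1)/4)) (nhdsWithin 1 (Iio 1)) (nhds 0) := by
    have h1 : Tendsto (fun y : ℝ => 1 - y) (nhdsWithin 1 (Iio 1)) (nhds 0) := by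
      have hcont : Continuous (fun y : ℝ => 1 - y) := continuous_const.sub continuous_id
      have := (hcont.tendsto (1:ℝ)).mono_left (nhdsWithin_le_nhds (s := Iio 1))
      simpa using this
    have h2 : Tendsto (fun x : ℝ => x ^ ((2*k+1)/4)) (nhds 0) (nhds 0) := by
      have hcont := (Real.continuous_rpow_const (q := (2*k+1)/4) (by linarith)).tendsto 0
      rwa [Real.zero_rpow (ne_of_gt (by linarith : (0:ℝ) < (2*k+1)/4))] at hcont
    have := (h2.comp h1).const_mul K₃
    simpa using this
  refine squeeze_zero' ?_ ?_ htend
  · filter_upwards [hmem] with y hy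
    exact (hkey y hy.1 hy.2).1
  · filter_upwards [hmem] with y hy
    exact (hkey y hy.1 hy.2).2
end
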